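/- arXiv:1910.08798 — 3 statements merged into one kernel-verified Lean document; each statement's English description precedes it below -/
import Mathlib

section
/- Let m, M be positive integers, let f_1, …, f_M ∈ ℝ^{2^m} and r_1, …, r_M ∈ ℝ, and define the loss function L : ℝ^m → ℝ by L(θ) = (1/(2M)) · Σ_{t=1}^M ( w(θ)·f_t − r_t )². Then for each j ∈ {1, …, m}, the partial derivative of L with respect to θ_j at θ equals (1/M) · Σ_{t=1}^M ( w(θ)·f_t − r_t ) · ( w(θ + (π/2)·e_j)·f_t ), where e_j is the j-th standard basis vector of ℝ^m and · denotes the Euclidean dot product on ℝ^{2^m}. -/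
open Real Finset Matrix

/-- The weight vector `w(θ) ∈ ℝ^{2^m}` of the quantum RBF network, defined as the
Kronecker product `⊗_{j=1}^m (cos θ_j, sin θ_j)`, indexed by `t` via its binary digits. -/
noncomputable def weight (m : ℕ) (θ : Fin m → ℝ) : Fin (2 ^ m) → ℝ := fun t =>
  ∏ j : Fin m, if (t : ℕ) / 2 ^ (j : ℕ) % 2 = 0 then Real.cos (θ j) else Real.sin (θ j)

/-!
Each entry of `w(θ)` is a product `∏ᵢ φᵢ(θᵢ)` with every factor `φᵢ ∈ {cos, sin}` satisfying
`φᵢ' (x) = φᵢ (x + π/2)`; so differentiating in `θⱼ` amounts to shifting `θⱼ` by `π/2`, and the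
chain rule for the half mean squared error gives the stated gradient.
-/

section Derivatives

variable {𝕜 : Type*} [NontriviallyNormedField 𝕜] {ι : Type*} [Fintype ι] [DecidableEq ι]

theorem hasDerivAt_prod_update (φ : ι → 𝕜 → 𝕜) (x : ι → 𝕜) (j : ι) {φ' : 𝕜}
    (h : HasDerivAt (φ j) φ' (x j)) :
    HasDerivAt (fun s => ∏ i, φ i (Function.update x j s i))
      (∏ i, Function.update (fun i => φ i (x i)) j φ' i) (x j) := by
  simp_rw [Function.apply_update φ, prod_update_of_mem (mem_univ j)]
  exact h.mul_const _

theorem hasDerivAt_prod_update_of_hasDerivAt_shift (φ : ι → 𝕜 → 𝕜) (x : ι → 𝕜) (j : ι) (a : 𝕜)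
    (h : HasDerivAt (φ j) (φ j (x j + a)) (x j)) :
    HasDerivAt (fun s => ∏ i, φ i (Function.update x j s i))
      (∏ i, φ i ((x + Pi.single j a : ι → 𝕜) i)) (x j) := by
  convert hasDerivAt_prod_update φ x j h using 1
  refine prod_congr rfl fun i _ => ?_
  rcases eq_or_ne i j with rfl | hij
  · simp
  · simp [hij]

theorem HasDerivAt.dotProduct_const {n : Type*} [Fintype n] {u : 𝕜 → n → 𝕜} {u' : n → 𝕜}
    {x : 𝕜} (hu : ∀ i, HasDerivAt (fun s => u s i) (u' i) x) (v : n → 𝕜) :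
    HasDerivAt (fun s => u s ⬝ᵥ v) (u' ⬝ᵥ v) x :=
  HasDerivAt.fun_sum fun i _ => (hu i).mul_const (v i)

end Derivatives

theorem hasDerivAt_half_mean_sq_sub {ι : Type*} (s : Finset ι) (N : ℝ) {g : ι → ℝ → ℝ}
    {g' : ι → ℝ} {x : ℝ} (hg : ∀ t ∈ s, HasDerivAt (g t) (g' t) x) (r : ι → ℝ) :
    HasDerivAt (fun y => 1 / (2 * N) * ∑ t ∈ s, (g t y - r t) ^ 2)
      (1 / N * ∑ t ∈ s, (g t x - r t) * g' t) x := by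
  have h := (HasDerivAt.fun_sum fun t ht => ((hg t ht).sub_const (r t)).fun_pow 2).const_mul
    (1 / (2 * N))
  refine h.congr_deriv ?_
  rw [mul_sum, mul_sum]
  refine sum_congr rfl fun t _ => ?_
  field_simp
  ring

theorem hasDerivAt_sin_add_pi_div_two (x : ℝ) : HasDerivAt sin (sin (x + π / 2)) x := by
  simpa only [sin_add_pi_div_two] using hasDerivAt_sin x

theorem hasDerivAt_cos_add_pi_div_two (x : ℝ) : HasDerivAt cos (cos (x + π / 2)) x := by
  simpa only [cos_add_pi_div_two] using hasDerivAt_cos x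

theorem hasDerivAt_weight_update (m : ℕ) (θ : Fin m → ℝ) (j : Fin m) (t : Fin (2 ^ m)) :
    HasDerivAt (fun s => weight m (Function.update θ j s) t)
      (weight m (θ + Pi.single j (π / 2)) t) (θ j) := by
  refine hasDerivAt_prod_update_of_hasDerivAt_shift
    (fun (i : Fin m) x => if (t : ℕ) / 2 ^ (i : ℕ) % 2 = 0 then cos x else sin x) θ j (π / 2) ?_
  split_ifs
  · exact hasDerivAt_cos_add_pi_div_two (θ j)
  · exact hasDerivAt_sin_add_pi_div_two (θ j)

theorem loss_hasDerivAt_general (m M : ℕ)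
    (f : Fin M → Fin (2 ^ m) → ℝ) (r : Fin M → ℝ) (θ : Fin m → ℝ) (j : Fin m) :
    HasDerivAt
      (fun s : ℝ => (1 / (2 * (M : ℝ))) *
        ∑ t : Fin M, (weight m (Function.update θ j s) ⬝ᵥ f t - r t) ^ 2)
      ((1 / (M : ℝ)) * ∑ t : Fin M,
        (weight m θ ⬝ᵥ f t - r t) * (weight m (θ + Pi.single j (π / 2)) ⬝ᵥ f t))
      (θ j) := by
  have h := hasDerivAt_half_mean_sq_sub univ M
    (fun t _ => HasDerivAt.dotProduct_const (hasDerivAt_weight_update m θ j) (f t)) r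
  simpa only [Function.update_eq_self] using h

/-- For the loss `L(θ) = (1/(2M))·Σ_t (w(θ)·f_t − r_t)²`, the partial derivative with
respect to `θ_j` at `θ` equals `(1/M)·Σ_t (w(θ)·f_t − r_t)·(w(θ + (π/2)e_j)·f_t)`. -/
theorem loss_hasDerivAt (m M : ℕ) (hm : 0 < m) (hM : 0 < M)
    (f : Fin M → Fin (2 ^ m) → ℝ) (r : Fin M → ℝ) (θ : Fin m → ℝ) (j : Fin m) :
    HasDerivAt
      (fun s : ℝ => (1 / (2 * (M : ℝ))) *
        ∑ t : Fin M, (weight m (Function.update θ j s) ⬝ᵥ f t - r t) ^ 2)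
      ((1 / (M : ℝ)) * ∑ t : Fin M,
        (weight m θ ⬝ᵥ f t - r t) * (weight m (θ + Pi.single j (π / 2)) ⬝ᵥ f t))
      (θ j) :=
  loss_hasDerivAt_general m M f r θ j
end

section
/- Let m, M be positive integers, let f_1, …, f_M ∈ ℝ^{2^m} and r_1, …, r_M ∈ ℝ, and define L : ℝ^m → ℝ by L(θ) = (1/(2M)) · Σ_{t=1}^M ( w(θ)·f_t − r_t )². Then for all j, k ∈ {1, …, m}, the second-order partial derivative ∂²L/∂θ_j∂θ_k at θ equals (1/M)·Σ_{t=1}^M ( w(θ)·f_t − r_t )·( w(θ + (π/2)(e_j + e_k))·f_t ) + (1/M)·Σ_{t=1}^M ( w(θ + (π/2)e_j)·f_t )·( w(θ + (π/2)e_k)·f_t ), where e_j denotes the j-th standard basis vector of ℝ^m. -/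
open Real Finset Matrix

/-- The loss function `L(θ) = (1/(2M))·Σ_{t=1}^M (w(θ)·f_t − r_t)²`. -/
noncomputable def loss (m M : ℕ) (f : Fin M → Fin (2 ^ m) → ℝ) (r : Fin M → ℝ)
    (θ : Fin m → ℝ) : ℝ :=
  (1 / (2 * (M : ℝ))) * ∑ t : Fin M, (weight m θ ⬝ᵥ f t - r t) ^ 2


/-!
Every factor of `w(θ)` is `cos` or `sin`, whose derivative is the same function shifted by
`π/2`; by the product rule, `∂w/∂θ_j (θ) = w(θ + (π/2)e_j)` (the parameter-shift rule), and this
persists for every linear functional of `w`, in particular for `θ ↦ w(θ)·f_t`. Differentiating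
the squared loss once by the chain rule and once more by the product rule, and evaluating each
partial derivative of `w(·)·f_t` by a shift, gives the formula.
-/

variable {ι κ : Type*} [Fintype ι] [DecidableEq ι] [Fintype κ] {c : ℝ}

def HasShiftGradient (c : ℝ) (g : (ι → ℝ) → ℝ) : Prop :=
  ∀ θ, HasFDerivAt g (∑ i, g (θ + Pi.single i c) • ContinuousLinearMap.proj (R := ℝ) i) θ

namespace HasShiftGradient

variable {g : (ι → ℝ) → ℝ}

theorem comp_add_right (hg : HasShiftGradient c g) (a : ι → ℝ) :
    HasShiftGradient c (fun θ => g (θ + a)) := fun θ => by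
  simpa only [hasFDerivAt_comp_add_right, add_right_comm θ a] using hg (θ + a)

theorem dotProduct {w : (ι → ℝ) → κ → ℝ} (hw : ∀ s, HasShiftGradient c (w · s)) (v : κ → ℝ) :
    HasShiftGradient c (fun θ => w θ ⬝ᵥ v) := fun θ => by
  refine (HasFDerivAt.fun_sum fun s _ => (hw s θ).mul_const (v s)).congr_fderiv ?_
  simp only [_root_.dotProduct, Finset.sum_smul, Finset.smul_sum, smul_smul]
  rw [Finset.sum_comm]
  simp only [mul_comm]

end HasShiftGradient

theorem hasShiftGradient_prod {h : ι → ℝ → ℝ} (hh : ∀ i x, HasDerivAt (h i) (h i (x + c)) x) :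
    HasShiftGradient c (fun θ => ∏ i, h i (θ i)) := fun θ => by
  refine (HasFDerivAt.finsetProd fun i _ =>
    (hh i (θ i)).comp_hasFDerivAt θ (hasFDerivAt_apply i θ)).congr_fderiv ?_
  refine Finset.sum_congr rfl fun i _ => ?_
  rw [smul_smul]
  congr 1
  dsimp only [Function.comp_apply]
  rw [← Finset.prod_erase_mul _ _ (Finset.mem_univ i)]
  congr 1
  · refine Finset.prod_congr rfl fun l hl => ?_
    simp [Finset.ne_of_mem_erase hl]
  · simp

section SquaredLoss

variable {g : κ → (ι → ℝ) → ℝ} (a : ℝ) (r : κ → ℝ)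

theorem fderiv_const_mul_sum_sq_sub_apply_single (hg : ∀ t, HasShiftGradient c (g t))
    (θ : ι → ℝ) (k : ι) :
    fderiv ℝ (fun θ => a * ∑ t, (g t θ - r t) ^ 2) θ (Pi.single k 1) =
      2 * a * ∑ t, (g t θ - r t) * g t (θ + Pi.single k c) := by
  have H := (HasFDerivAt.fun_sum (u := Finset.univ) fun t _ =>
    ((hg t θ).sub_const (r t)).pow 2).const_mul a
  rw [H.fderiv]
  simp only [Nat.add_one_sub_one, pow_one, nsmul_eq_mul, Nat.cast_ofNat,
    _root_.smul_apply, _root_.sum_apply, ContinuousLinearMap.proj_apply,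
    Pi.single_apply, smul_eq_mul, mul_ite, mul_one, mul_zero, Finset.sum_ite_eq',
    Finset.mem_univ, if_true, Finset.mul_sum]
  exact Finset.sum_congr rfl fun _ _ => by ring

theorem fderiv_const_mul_sum_sub_mul_shift_apply_single (hg : ∀ t, HasShiftGradient c (g t))
    (θ : ι → ℝ) (j k : ι) :
    fderiv ℝ (fun θ => a * ∑ t, (g t θ - r t) * g t (θ + Pi.single k c)) θ (Pi.single j 1) =
      a * ∑ t, (g t θ - r t) * g t (θ + Pi.single j c + Pi.single k c) +
      a * ∑ t, g t (θ + Pi.single j c) * g t (θ + Pi.single k c) := by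
  have H := (HasFDerivAt.fun_sum (u := Finset.univ) fun t _ =>
    ((hg t θ).sub_const (r t)).fun_mul ((hg t).comp_add_right (Pi.single k c) θ)).const_mul a
  rw [H.fderiv]
  simp only [_root_.smul_apply, _root_.sum_apply,
    _root_.add_apply, ContinuousLinearMap.proj_apply, Pi.single_apply, smul_eq_mul,
    mul_ite, mul_one, mul_zero, Finset.sum_ite_eq', Finset.mem_univ, if_true, Finset.mul_sum,
    ← Finset.sum_add_distrib]
  exact Finset.sum_congr rfl fun _ _ => by ring

end SquaredLoss

theorem hasShiftGradient_weight_apply (m : ℕ) (t : Fin (2 ^ m)) :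
    HasShiftGradient (π / 2) (fun θ => weight m θ t) :=
  hasShiftGradient_prod
    (h := fun (i : Fin m) x => if (t : ℕ) / 2 ^ (i : ℕ) % 2 = 0 then cos x else sin x)
    fun i x => by
      split_ifs
      · simpa [cos_add_pi_div_two] using hasDerivAt_cos x
      · simpa [sin_add_pi_div_two] using hasDerivAt_sin x

theorem loss_second_deriv_general (m M : ℕ)
    (f : Fin M → Fin (2 ^ m) → ℝ) (r : Fin M → ℝ) (θ : Fin m → ℝ) (j k : Fin m) :
    fderiv ℝ (fun θ' => fderiv ℝ (loss m M f r) θ' (Pi.single k 1)) θ (Pi.single j 1) =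
      (1 / (M : ℝ)) * ∑ t : Fin M, (weight m θ ⬝ᵥ f t - r t) *
          (weight m (θ + Pi.single j (π / 2) + Pi.single k (π / 2)) ⬝ᵥ f t) +
      (1 / (M : ℝ)) * ∑ t : Fin M, (weight m (θ + Pi.single j (π / 2)) ⬝ᵥ f t) *
          (weight m (θ + Pi.single k (π / 2)) ⬝ᵥ f t) := by
  have hw (t : Fin M) : HasShiftGradient (π / 2) (fun θ => weight m θ ⬝ᵥ f t) :=
    HasShiftGradient.dotProduct (hasShiftGradient_weight_apply m) (f t)
  have hcoeff : 2 * (1 / (2 * (M : ℝ))) = 1 / M := by ring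
  unfold loss
  simp_rw [fderiv_const_mul_sum_sq_sub_apply_single _ r hw, hcoeff]
  exact fderiv_const_mul_sum_sub_mul_shift_apply_single _ r hw θ j k

/-- The second-order partial derivative `∂²L/∂θ_j∂θ_k` of the loss at `θ` equals
`(1/M)·Σ_t (w(θ)·f_t − r_t)·(w(θ + (π/2)(e_j + e_k))·f_t)
  + (1/M)·Σ_t (w(θ + (π/2)e_j)·f_t)·(w(θ + (π/2)e_k)·f_t)`. -/
theorem loss_second_deriv (m M : ℕ) (hm : 0 < m) (hM : 0 < M)
    (f : Fin M → Fin (2 ^ m) → ℝ) (r : Fin M → ℝ) (θ : Fin m → ℝ) (j k : Fin m) :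
    fderiv ℝ (fun θ' => fderiv ℝ (loss m M f r) θ' (Pi.single k 1)) θ (Pi.single j 1) =
      (1 / (M : ℝ)) * ∑ t : Fin M, (weight m θ ⬝ᵥ f t - r t) *
          (weight m (θ + Pi.single j (π / 2) + Pi.single k (π / 2)) ⬝ᵥ f t) +
      (1 / (M : ℝ)) * ∑ t : Fin M, (weight m (θ + Pi.single j (π / 2)) ⬝ᵥ f t) *
          (weight m (θ + Pi.single k (π / 2)) ⬝ᵥ f t) :=
  loss_second_deriv_general m M f r θ j k
end

section
/- Let a ∈ ℝ and ε ∈ (0, 1]. For every natural number N with N ≥ 1 and N ≥ e²·a² + log(1/ε), one has Σ_{k=N}^∞ a^{2k} / k! ≤ ε. In particular, truncating the coherent state series at N = O(a² + log(1/ε)) terms suffices for accuracy ε. -/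
open Real

lemma exp_tsum' (x : ℝ) : Real.exp x = ∑' n : ℕ, x ^ n / n.factorial := by
  rw [Real.exp_eq_exp_ℝ, NormedSpace.exp_eq_tsum_div]

/-- For `ε ∈ (0, 1]` and any natural `N ≥ 1` with `N ≥ e²·a² + log(1/ε)`, the tail of
the series `Σ_k a^{2k}/k!` satisfies `Σ_{k=N}^∞ a^{2k}/k! ≤ ε`; i.e. truncating the
coherent state series at `N = O(a² + log(1/ε))` terms suffices for accuracy `ε`. -/
theorem tail_small (a ε : ℝ) (hε : 0 < ε) (hε1 : ε ≤ 1) (N : ℕ) (hN : 1 ≤ N)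
    (hN2 : Real.exp 1 ^ 2 * a ^ 2 + Real.log (1 / ε) ≤ (N : ℝ)) :
    ∑' k : ℕ, a ^ (2 * (N + k)) / Nat.factorial (N + k) ≤ ε := by
  set b := a ^ 2 with hbdef
  have hb0 : (0:ℝ) ≤ b := sq_nonneg a
  have hNpos : (0:ℝ) < N := by exact_mod_cast hN
  have hlog : 0 ≤ Real.log (1/ε) := Real.log_nonneg (by rw [le_div_iff₀ hε]; linarith)
  have he2b : Real.exp 1 ^ 2 * b ≤ N := by linarith
  have hg : Summable (fun k : ℕ => b ^ k / (k.factorial : ℝ)) :=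
    Real.summable_pow_div_factorial b
  set C : ℝ := b ^ N / N.factorial with hCdef
  have hC0 : 0 ≤ C := div_nonneg (pow_nonneg hb0 _) (Nat.cast_nonneg _)
  have hterm : ∀ k : ℕ, a ^ (2*(N+k)) / ((N+k).factorial : ℝ)
      ≤ C * (b ^ k / k.factorial) := by
    intro k
    have hfac : (N.factorial : ℝ) * k.factorial ≤ ((N+k).factorial : ℝ) := by
      exact_mod_cast Nat.le_of_dvd (N+k).factorial_pos
        (Nat.factorial_mul_factorial_dvd_factorial_add N k)
    have h1 : a ^ (2*(N+k)) = b ^ (N+k) := by rw [pow_mul]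
    rw [h1]
    have h2 : b ^ (N+k) / ((N+k).factorial : ℝ) ≤ b ^ (N+k) / ((N.factorial : ℝ) * k.factorial) :=
      div_le_div_of_nonneg_left (pow_nonneg hb0 _)
        (by positivity) hfac
    calc b ^ (N+k) / ((N+k).factorial : ℝ) ≤ b ^ (N+k) / ((N.factorial : ℝ) * k.factorial) := h2
      _ = C * (b ^ k / k.factorial) := by rw [pow_add, hCdef, div_mul_div_comm]
  have hCg : Summable (fun k : ℕ => C * (b ^ k / k.factorial)) := hg.mul_left C
  have htermnn : ∀ k : ℕ, 0 ≤ a ^ (2*(N+k)) / ((N+k).factorial : ℝ) := by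
    intro k
    have : a ^ (2*(N+k)) = b ^ (N+k) := by rw [pow_mul]
    rw [this]; positivity
  have hsumtail : Summable (fun k : ℕ => a ^ (2*(N+k)) / ((N+k).factorial : ℝ)) :=
    Summable.of_nonneg_of_le htermnn hterm hCg
  have step1 : ∑' k : ℕ, a ^ (2*(N+k)) / ((N+k).factorial : ℝ)
      ≤ C * Real.exp b := by
    calc ∑' k : ℕ, a ^ (2*(N+k)) / ((N+k).factorial : ℝ)
        ≤ ∑' k : ℕ, C * (b ^ k / k.factorial) := Summable.tsum_le_tsum hterm hsumtail hCg
      _ = C * ∑' k : ℕ, b ^ k / (k.factorial : ℝ) := tsum_mul_left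
      _ = C * Real.exp b := by rw [exp_tsum' b]
  refine step1.trans ?_
  -- factorial lower bound: N^N / exp N ≤ N!
  have hfacN : (N:ℝ)^N / Real.exp N ≤ (N.factorial : ℝ) := by
    have h1 : (N:ℝ)^N / N.factorial ≤ Real.exp N := by
      rw [exp_tsum' (N:ℝ)]
      exact Summable.le_tsum (Real.summable_pow_div_factorial (N:ℝ)) N
        (fun i _ => by positivity)
    rw [div_le_iff₀ (by positivity)] at h1 ⊢
    linarith [h1]
  have hexpN : Real.exp 1 ^ N = Real.exp N := by
    rw [← Real.exp_nat_mul]; ring_nf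
  have hCle : C ≤ (b * Real.exp 1 / N) ^ N := by
    have : (b * Real.exp 1 / N) ^ N = b ^ N / ((N:ℝ)^N / Real.exp N) := by
      rw [div_pow, mul_pow, hexpN]
      field_simp
    rw [this, hCdef]
    exact div_le_div_of_nonneg_left (pow_nonneg hb0 _) (by positivity) hfacN
  have hratio : b * Real.exp 1 / N ≤ Real.exp (-1) := by
    have key : b * Real.exp 1 * Real.exp 1 ≤ N := by nlinarith [he2b]
    rw [Real.exp_neg, div_le_iff₀ hNpos, inv_mul_eq_div, le_div_iff₀ (Real.exp_pos 1)]
    exact key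
  have hpow : (b * Real.exp 1 / N) ^ N ≤ Real.exp (-(N:ℝ)) := by
    have h := pow_le_pow_left₀ (by positivity) hratio N
    rwa [← Real.exp_nat_mul, show (N:ℝ) * (-1) = -(N:ℝ) by ring] at h
  have hfinal : C * Real.exp b ≤ Real.exp (b - N) := by
    rw [show b - (N:ℝ) = -(N:ℝ) + b by ring, Real.exp_add]
    exact mul_le_mul (hCle.trans hpow) le_rfl (Real.exp_pos b).le (Real.exp_pos _).le
  refine hfinal.trans ?_
  have : b - (N:ℝ) ≤ Real.log ε := by
    have he1 : (1:ℝ) ≤ Real.exp 1 := by linarith [Real.add_one_le_exp 1]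
    have he2 : (1:ℝ) ≤ Real.exp 1 ^ 2 := by nlinarith
    have hbb : b ≤ Real.exp 1 ^ 2 * b := le_mul_of_one_le_left hb0 he2
    rw [one_div, Real.log_inv] at hN2
    linarith
  calc Real.exp (b - N) ≤ Real.exp (Real.log ε) := Real.exp_le_exp.mpr this
    _ = ε := Real.exp_log hε
end
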